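/- arXiv:1811.01158 — 7 statements merged into one kernel-verified Lean document; each statement's English description precedes it below -/
import Mathlib

section
/- Let Ẑ ∈ ℝ^{P×I}, ŷ ∈ ℝ^P, ŵ ∈ ℝ^I, M > 0, ε > 0, and set J(w) = (1/M)‖ŷ − Ẑw‖₂² and ê = ŷ − Ẑŵ. Then for every coordinate i, min over s ∈ {−ε, ε} of J(ŵ + s·e_i) equals (1/M)(‖ê‖₂² − ε·(2|⟨ê, Ẑe_i⟩| − ε‖Ẑe_i‖₂²)), and this minimum is attained at s = ε·sign(⟨ê, Ẑe_i⟩) whenever ⟨ê, Ẑe_i⟩ ≠ 0. Consequently, minimizing min_{s=±ε} J(ŵ + s·e_i) over coordinates i is equivalent to maximizing 2|⟨ê, Ẑe_i⟩| − ε‖Ẑe_i‖₂² over i. (Closed-form characterization of the forward step of SURF.) -/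
/-!
Along a coordinate direction the least-squares loss is a quadratic in the step length `s`:
`‖ê - s Ẑeᵢ‖² = ‖ê‖² - 2s⟨ê, Ẑeᵢ⟩ + s²‖Ẑeᵢ‖²`. At `s = ±ε` the quadratic term is the same, so the
smaller of the two values is the one whose linear term is `-2ε|⟨ê, Ẑeᵢ⟩|`, reached for
`s = ε · sign ⟨ê, Ẑeᵢ⟩`. Comparing coordinates then only compares `2|⟨ê, Ẑeᵢ⟩| - ε‖Ẑeᵢ‖²`.
-/

open Matrix

theorem sum_sq_sub_mulVec_add_smul {ι κ : Type*} [Fintype ι] [Fintype κ] (Z : Matrix ι κ ℝ)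
    (y : ι → ℝ) (w d : κ → ℝ) (s : ℝ) :
    ∑ p, (y p - (Z *ᵥ (w + s • d)) p) ^ 2
      = ∑ p, (y - Z *ᵥ w) p ^ 2 - 2 * s * ∑ p, (y - Z *ᵥ w) p * (Z *ᵥ d) p
        + s ^ 2 * ∑ p, (Z *ᵥ d) p ^ 2 := by
  rw [Finset.mul_sum, Finset.mul_sum, ← Finset.sum_sub_distrib, ← Finset.sum_add_distrib]
  refine Finset.sum_congr rfl fun p _ => ?_
  simp only [mulVec_add, mulVec_smul, Pi.add_apply, Pi.sub_apply, Pi.smul_apply, smul_eq_mul]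
  ring

theorem min_sub_add_eq_sub_abs (a b : ℝ) : min (a - b) (a + b) = a - |b| := by
  rcases le_total 0 b with hb | hb
  · rw [abs_of_nonneg hb, min_eq_left (by linarith)]
  · rw [abs_of_nonpos hb, min_eq_right (by linarith), sub_neg_eq_add]

theorem min_quadratic_at_pm {ε : ℝ} (hε : 0 ≤ ε) (c g q : ℝ) :
    min (c - 2 * ε * g + ε ^ 2 * q) (c - 2 * (-ε) * g + (-ε) ^ 2 * q)
      = c - ε * (2 * |g| - ε * q) := by
  calc _ = min (c + ε ^ 2 * q - 2 * ε * g) (c + ε ^ 2 * q + 2 * ε * g) := by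
        congr 1 <;> ring
    _ = c + ε ^ 2 * q - |2 * ε * g| := min_sub_add_eq_sub_abs _ _
    _ = _ := by rw [abs_mul, abs_mul, abs_two, abs_of_nonneg hε]; ring

theorem quadratic_at_sign_mul {g : ℝ} (hg : g ≠ 0) (c ε q : ℝ) :
    c - 2 * (ε * Real.sign g) * g + (ε * Real.sign g) ^ 2 * q = c - ε * (2 * |g| - ε * q) := by
  rcases hg.lt_or_gt with h | h
  · rw [Real.sign_of_neg h, abs_of_neg h]; ring
  · rw [Real.sign_of_pos h, abs_of_pos h]; ring

/-- Closed-form characterization of the forward step of SURF. -/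
theorem stmt_7 {P I : ℕ} (Zhat : Matrix (Fin P) (Fin I) ℝ) (yhat : Fin P → ℝ)
    (what : Fin I → ℝ) (M ε : ℝ) (hM : 0 < M) (hε : 0 < ε)
    (J : (Fin I → ℝ) → ℝ)
    (hJ : ∀ w, J w = (1 / M) * ∑ p, (yhat p - Zhat.mulVec w p) ^ 2)
    (ehat : Fin P → ℝ) (he : ehat = yhat - Zhat.mulVec what)
    (g : Fin I → ℝ)
    (hg : ∀ i, g i = ∑ p, ehat p * Zhat.mulVec ((Pi.single i 1 : Fin I → ℝ)) p)
    (q : Fin I → ℝ)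
    (hq : ∀ i, q i = ∑ p, (Zhat.mulVec ((Pi.single i 1 : Fin I → ℝ)) p) ^ 2) :
    (∀ i, min (J (what + ε • (Pi.single i 1 : Fin I → ℝ))) (J (what + (-ε) • (Pi.single i 1 : Fin I → ℝ)))
        = (1 / M) * (∑ p, (ehat p) ^ 2 - ε * (2 * |g i| - ε * q i)))
    ∧ (∀ i, g i ≠ 0 →
        J (what + (ε * Real.sign (g i)) • (Pi.single i 1 : Fin I → ℝ))
          = min (J (what + ε • (Pi.single i 1 : Fin I → ℝ))) (J (what + (-ε) • (Pi.single i 1 : Fin I → ℝ))))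
    ∧ (∀ i i',
        min (J (what + ε • (Pi.single i 1 : Fin I → ℝ))) (J (what + (-ε) • (Pi.single i 1 : Fin I → ℝ)))
          ≤ min (J (what + ε • (Pi.single i' 1 : Fin I → ℝ))) (J (what + (-ε) • (Pi.single i' 1 : Fin I → ℝ)))
        ↔ 2 * |g i'| - ε * q i' ≤ 2 * |g i| - ε * q i) := by
  have hMinv : 0 < 1 / M := one_div_pos.mpr hM
  have step : ∀ i (s : ℝ), J (what + s • (Pi.single i 1 : Fin I → ℝ))
      = (1 / M) * (∑ p, ehat p ^ 2 - 2 * s * g i + s ^ 2 * q i) := by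
    intro i s
    rw [hJ, sum_sq_sub_mulVec_add_smul, hg, hq, he]
  have best : ∀ i, min (J (what + ε • (Pi.single i 1 : Fin I → ℝ)))
      (J (what + (-ε) • (Pi.single i 1 : Fin I → ℝ)))
        = (1 / M) * (∑ p, ehat p ^ 2 - ε * (2 * |g i| - ε * q i)) := by
    intro i
    rw [step, step, ← mul_min_of_nonneg _ _ hMinv.le, min_quadratic_at_pm hε.le]
  refine ⟨best, fun i hgi => ?_, fun i i' => ?_⟩
  · rw [best, step, quadratic_at_sign_mul hgi]
  · rw [best, best, mul_le_mul_iff_right₀ hMinv, sub_le_sub_iff_left, mul_le_mul_iff_right₀ hε]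
end

section
/- Assume the predictors are standardized: Σ_{m=1}^M (X^m_{i₁,…,i_N})² = M for every index tuple (i₁,…,i_N). Let α ≥ 0, ε > 0, J(W) = (1/M)Σ_{m=1}^M (y^m − ⟨X^m,W⟩)² + α‖W‖_F², and c_{i₁,…,i_N} = Σ_{m=1}^M y^m X^m_{i₁,…,i_N}. For an index tuple idx, let E_idx denote the coordinate tensor e_{i₁}∘⋯∘e_{i_N} (outer product of standard basis vectors). Then (a) for every idx and every s with |s| = ε, J(s·E_idx) = (1/M)Σ_{m=1}^M (y^m)² − (2s/M)·c_idx + ε²(1+α); and (b) if idx* maximizes |c_idx| over all index tuples and s* = ε·sign(c_{idx*}), then J(s*·E_{idx*}) ≤ J(s·E_idx) for every index tuple idx and every s ∈ {−ε, ε}. (Closed-form solution of the SURF initialization step, part of Lemma 1.) -/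
/-- Closed-form solution of the SURF initialization step
(part of Lemma 1). -/
theorem stmt_9 {N M : ℕ} {I : Fin N → ℕ} [∀ n, NeZero (I n)] (hM : 0 < M)
    (X : Fin M → ((n : Fin N) → Fin (I n)) → ℝ) (y : Fin M → ℝ)
    (hstd : ∀ i : (n : Fin N) → Fin (I n), ∑ m, (X m i) ^ 2 = (M : ℝ))
    (α ε : ℝ) (hα : 0 ≤ α) (hε : 0 < ε)
    (J : (((n : Fin N) → Fin (I n)) → ℝ) → ℝ)
    (hJ : ∀ W, J W = (1 / (M : ℝ)) * ∑ m, (y m - ∑ i, X m i * W i) ^ 2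
        + α * ∑ i, (W i) ^ 2)
    (c : ((n : Fin N) → Fin (I n)) → ℝ)
    (hc : ∀ i, c i = ∑ m, y m * X m i)
    (E : ((n : Fin N) → Fin (I n)) → ((n : Fin N) → Fin (I n)) → ℝ)
    (hE : ∀ idx i, E idx i = ∏ n, (Pi.single (idx n) 1 : Fin (I n) → ℝ) (i n)) :
    (∀ idx (s : ℝ), |s| = ε →
        J (s • E idx) = (1 / (M : ℝ)) * ∑ m, (y m) ^ 2
          - (2 * s / (M : ℝ)) * c idx + ε ^ 2 * (1 + α))
    ∧ (∀ idxs : (n : Fin N) → Fin (I n), (∀ idx, |c idx| ≤ |c idxs|) →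
        ∀ idx (s : ℝ), s = ε ∨ s = -ε →
          J ((ε * Real.sign (c idxs)) • E idxs) ≤ J (s • E idx)) := by
  have hM0 : (M : ℝ) ≠ 0 := Nat.cast_ne_zero.mpr hM.ne'
  have hMpos : (0:ℝ) < M := Nat.cast_pos.mpr hM
  have hE' : ∀ idx i, E idx i = if i = idx then 1 else 0 := by
    intro idx i
    rw [hE]
    by_cases h : i = idx
    · subst h; simp [Pi.single_apply]
    · obtain ⟨n, hn⟩ := Function.ne_iff.mp h
      rw [if_neg h]
      apply Finset.prod_eq_zero (Finset.mem_univ n)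
      simp [Pi.single_apply, hn]
  have hsum1 : ∀ (s : ℝ) idx m, (∑ i, X m i * (s • E idx) i) = s * X m idx := by
    intro s idx m
    have h1 : ∀ i, X m i * (s • E idx) i = if i = idx then s * X m idx else 0 := by
      intro i
      simp only [Pi.smul_apply, smul_eq_mul, hE']
      split <;> simp_all <;> ring
    rw [Finset.sum_congr rfl (fun i _ => h1 i)]
    simp
  have hsum2 : ∀ (s : ℝ) idx, (∑ i, ((s • E idx) i) ^ 2) = s ^ 2 := by
    intro s idx
    have h1 : ∀ i, ((s • E idx) i) ^ 2 = if i = idx then s ^ 2 else 0 := by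
      intro i
      simp only [Pi.smul_apply, smul_eq_mul, hE']
      split <;> simp
    rw [Finset.sum_congr rfl (fun i _ => h1 i)]
    simp
  have hJval : ∀ (s : ℝ) idx, J (s • E idx)
      = (1 / (M : ℝ)) * ∑ m, (y m) ^ 2 - (2 * s / (M : ℝ)) * c idx
        + s ^ 2 * (1 + α) := by
    intro s idx
    rw [hJ]
    simp only [hsum1, hsum2]
    have expand : ∀ m : Fin M, (y m - s * X m idx) ^ 2
        = (y m) ^ 2 - 2 * s * (y m * X m idx) + s ^ 2 * (X m idx) ^ 2 := by
      intro m; ring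
    rw [Finset.sum_congr rfl (fun m _ => expand m)]
    rw [Finset.sum_add_distrib, Finset.sum_sub_distrib,
      ← Finset.mul_sum, ← Finset.mul_sum, hstd, hc]
    field_simp
    ring
  constructor
  · intro idx s hs
    rw [hJval]
    have hs2 : s ^ 2 = ε ^ 2 := by rw [← sq_abs, hs]
    rw [hs2]
  · intro idxs hmax idx s hs
    rw [hJval, hJval]
    have hs2 : s ^ 2 = ε ^ 2 := by rcases hs with h | h <;> rw [h] <;> ring
    have hsabs : |s| = ε := by
      rcases hs with h | h <;> rw [h] <;> simp [abs_of_pos hε, abs_of_neg (neg_neg_iff_pos.mpr hε)]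
    by_cases hcz : c idxs = 0
    · rw [hcz, Real.sign_zero, mul_zero]
      have hcidx : c idx = 0 := by
        have h := hmax idx; rw [hcz, abs_zero] at h
        exact abs_eq_zero.mp (le_antisymm h (abs_nonneg _))
      rw [hcidx, hs2]
      nlinarith [sq_nonneg ε, mul_nonneg (sq_nonneg ε) hα]
    · have hsign2 : (Real.sign (c idxs)) ^ 2 = 1 := by
        rcases lt_or_gt_of_ne hcz with h | h
        · rw [Real.sign_of_neg h]; ring
        · rw [Real.sign_of_pos h]; ring
      have hsignmul : Real.sign (c idxs) * c idxs = |c idxs| := by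
        rcases lt_or_gt_of_ne hcz with h | h
        · rw [Real.sign_of_neg h, abs_of_neg h]; ring
        · rw [Real.sign_of_pos h, abs_of_pos h]; ring
      have h1 : (ε * Real.sign (c idxs)) ^ 2 = ε ^ 2 := by
        rw [mul_pow, hsign2, mul_one]
      rw [h1, hs2]
      have key : s * c idx ≤ ε * |c idxs| := by
        calc s * c idx ≤ |s * c idx| := le_abs_self _
        _ = |s| * |c idx| := abs_mul _ _
        _ = ε * |c idx| := by rw [hsabs]
        _ ≤ ε * |c idxs| := by exact mul_le_mul_of_nonneg_left (hmax idx) hε.le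
      have h2 : (ε * Real.sign (c idxs)) * c idxs = ε * |c idxs| := by
        rw [mul_assoc, hsignmul]
      have : - (2 * (ε * Real.sign (c idxs)) / (M:ℝ) * c idxs) ≤ - (2 * s / (M:ℝ) * c idx) := by
        rw [neg_le_neg_iff]
        rw [div_mul_eq_mul_div, div_mul_eq_mul_div, div_le_div_iff₀ hMpos hMpos]
        have : 2 * (ε * Real.sign (c idxs)) * c idxs = 2 * (ε * |c idxs|) := by
          rw [mul_assoc 2, h2]
        nlinarith [key]
      linarith
end

section
/- Let α ≥ 0 and define Γ(W;λ) = (1/M)Σ_{m=1}^M (y^m − ⟨X^m,W⟩)² + λ‖W‖₁ + α‖W‖_F², and λ_max = (2/M)·max over all index tuples (i₁,…,i_N) of |Σ_{m=1}^M y^m X^m_{i₁,…,i_N}|. Then the zero tensor is a global minimizer of Γ(·;λ) over the set of tensors of rank at most 1 (i.e., tensors of the form σ·w⁽¹⁾∘⋯∘w⁽ᴺ⁾ with σ ∈ ℝ and w⁽ⁿ⁾ ∈ ℝ^{Iₙ}) if and only if λ ≥ λ_max. (Lemma 1: λ_max is the threshold tuning parameter at which a nonzero solution of the sparse unit-rank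 tensor regression problem first appears.) -/
/-- Lemma 1: the zero tensor is a global minimizer of the
penalized objective over tensors of rank at most 1 iff `λ ≥ λ_max`. -/
theorem stmt_10 {N M : ℕ} {I : Fin N → ℕ} [∀ n, NeZero (I n)] (hM : 0 < M)
    (X : Fin M → ((n : Fin N) → Fin (I n)) → ℝ) (y : Fin M → ℝ)
    (α : ℝ) (hα : 0 ≤ α) (lam : ℝ)
    (Γ : (((n : Fin N) → Fin (I n)) → ℝ) → ℝ)
    (hΓ : ∀ W, Γ W = (1 / (M : ℝ)) * ∑ m, (y m - ∑ i, X m i * W i) ^ 2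
        + lam * ∑ i, |W i| + α * ∑ i, (W i) ^ 2)
    (lammax : ℝ)
    (hlm : lammax = (2 / (M : ℝ)) *
        ⨆ i : (n : Fin N) → Fin (I n), |∑ m, y m * X m i|) :
    (∀ (σ : ℝ) (w : (n : Fin N) → Fin (I n) → ℝ),
        Γ 0 ≤ Γ (fun i => σ * ∏ n, w n (i n)))
      ↔ lammax ≤ lam := by
  have hMpos : (0:ℝ) < M := by exact_mod_cast hM
  set c : ((n : Fin N) → Fin (I n)) → ℝ := fun i => ∑ m, y m * X m i with hc
  obtain ⟨i0, hi0⟩ := Finite.exists_max (fun i : (n : Fin N) → Fin (I n) => |c i|)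
  have hsup : (⨆ i : (n : Fin N) → Fin (I n), |c i|) = |c i0| :=
    le_antisymm (ciSup_le hi0)
      (le_ciSup (f := fun i => |c i|) (Set.Finite.bddAbove (Set.finite_range _)) i0)
  have hlm' : lammax = (2 / (M : ℝ)) * |c i0| := by rw [hlm, ← hsup]
  have hΓ0 : Γ 0 = (1 / (M:ℝ)) * ∑ m, (y m)^2 := by simp [hΓ]
  constructor
  · -- forward direction
    intro h
    set S : ℝ := ∑ m, (X m i0)^2 with hS
    have hS0 : 0 ≤ S := Finset.sum_nonneg fun m _ => sq_nonneg _
    have key : ∀ t : ℝ, 0 < t → lammax ≤ lam + t * (S / M + α) := by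
      intro t ht
      set σt : ℝ := if 0 ≤ c i0 then t else -t with hσt
      have habs : |σt| = t := by
        rcases le_or_gt 0 (c i0) with hcc | hcc
        · rw [hσt, if_pos hcc, abs_of_pos ht]
        · rw [hσt, if_neg hcc.not_ge, abs_neg, abs_of_pos ht]
      have hsq : σt^2 = t^2 := by
        rcases le_or_gt 0 (c i0) with hcc | hcc
        · rw [hσt, if_pos hcc]
        · rw [hσt, if_neg hcc.not_ge]; ring
      have hmulc : σt * c i0 = t * |c i0| := by
        rcases le_or_gt 0 (c i0) with hcc | hcc
        · rw [hσt, if_pos hcc, abs_of_nonneg hcc]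
        · rw [hσt, if_neg hcc.not_ge, abs_of_neg hcc]; ring
      have hW : (fun i => σt * ∏ n, (fun n j => if j = i0 n then (1:ℝ) else 0) n (i n))
          = fun i => if i = i0 then σt else 0 := by
        funext i
        by_cases hii : i = i0
        · subst hii; simp
        · have : ∃ n, i n ≠ i0 n := by
            by_contra hcon
            push_neg at hcon
            exact hii (funext hcon)
          obtain ⟨n, hn⟩ := this
          rw [if_neg hii]
          rw [Finset.prod_eq_zero (Finset.mem_univ n) (by simp [hn])]
          ring
      have h2 := h σt (fun n j => if j = i0 n then (1:ℝ) else 0)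
      rw [hW, hΓ0, hΓ] at h2
      have e1 : ∀ m, (∑ i, X m i * (if i = i0 then σt else 0)) = X m i0 * σt := by
        intro m
        simp [mul_ite, mul_zero, Finset.sum_ite_eq']
      have e2 : (∑ i, |if i = i0 then σt else 0|) = |σt| := by
        simp [apply_ite abs, abs_zero, Finset.sum_ite_eq']
      have e3 : (∑ i, (if i = i0 then σt else 0)^2) = σt^2 := by
        simp [apply_ite (· ^ 2), Finset.sum_ite_eq']
      simp only [e2, e3] at h2
      have e4 : (∑ m, (y m - ∑ i, X m i * (if i = i0 then σt else 0))^2)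
          = ∑ m, (y m)^2 - 2 * (σt * c i0) + σt^2 * S := by
        have : ∀ m ∈ Finset.univ, (y m - ∑ i, X m i * (if i = i0 then σt else 0))^2
            = (y m)^2 - 2 * (σt * (y m * X m i0)) + σt^2 * (X m i0)^2 := by
          intro m _; rw [e1 m]; ring
        rw [Finset.sum_congr rfl this]
        simp [Finset.sum_add_distrib, Finset.sum_sub_distrib, ← Finset.mul_sum, hc, hS]
      rw [e4, habs, hsq, hmulc] at h2
      have hexp2 : (1/(M:ℝ)) * (∑ m, (y m)^2 - 2 * (t * |c i0|) + t^2 * S)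
          = (1/(M:ℝ)) * ∑ m, (y m)^2 - (2/(M:ℝ)) * (t * |c i0|) + t^2 * (S / M) := by
        ring
      rw [hexp2] at h2
      rw [hlm']
      have hr : (lam + t * (S/M + α)) * t = lam * t + t^2 * (S/M) + α * t^2 := by ring
      have hl2 : (2/(M:ℝ)) * |c i0| * t = (2/(M:ℝ)) * (t * |c i0|) := by ring
      have key2 : (2/(M:ℝ)) * |c i0| * t ≤ (lam + t * (S/M + α)) * t := by
        rw [hr, hl2]; linarith
      exact le_of_mul_le_mul_right key2 ht
    refine le_of_forall_pos_le_add fun ε hε => ?_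
    have hK : (0:ℝ) < S / M + α + 1 := by positivity
    have ht : 0 < ε / (S / M + α + 1) := by positivity
    have h3 := key _ ht
    have h4 : (ε / (S / M + α + 1)) * (S / M + α) ≤ ε := by
      rw [div_mul_eq_mul_div, div_le_iff₀ hK]
      nlinarith [div_nonneg hS0 hMpos.le]
    linarith
  · -- backward direction
    intro hl σ w
    set W : ((n : Fin N) → Fin (I n)) → ℝ := fun i => σ * ∏ n, w n (i n) with hWdef
    rw [hΓ0, hΓ]
    set z : Fin M → ℝ := fun m => ∑ i, X m i * W i with hz
    have e4 : (∑ m, (y m - z m)^2)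
        = ∑ m, (y m)^2 - 2 * ∑ m, y m * z m + ∑ m, (z m)^2 := by
      rw [Finset.sum_congr rfl (fun m _ => by ring :
        ∀ m ∈ Finset.univ, (y m - z m)^2 = (y m)^2 - 2 * (y m * z m) + (z m)^2)]
      rw [Finset.sum_add_distrib, Finset.sum_sub_distrib, ← Finset.mul_sum]
    have hswap : (∑ m, y m * z m) = ∑ i, c i * W i := by
      simp_rw [hz, Finset.mul_sum, hc, Finset.sum_mul]
      rw [Finset.sum_comm]
      exact Finset.sum_congr rfl fun i _ => Finset.sum_congr rfl fun m _ => by ring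
    have habs1 : (∑ i, c i * W i) ≤ ∑ i, |c i0| * |W i| :=
      Finset.sum_le_sum fun i _ => le_trans (le_abs_self _)
        (by rw [abs_mul]; exact mul_le_mul_of_nonneg_right (hi0 i) (abs_nonneg _))
    have habs2 : (∑ i, |c i0| * |W i|) = |c i0| * ∑ i, |W i| := by
      rw [Finset.mul_sum]
    have hWn : (0:ℝ) ≤ ∑ i, |W i| := Finset.sum_nonneg fun i _ => abs_nonneg _
    have hz2 : (0:ℝ) ≤ ∑ m, (z m)^2 := Finset.sum_nonneg fun m _ => sq_nonneg _
    have hW2 : (0:ℝ) ≤ ∑ i, (W i)^2 := Finset.sum_nonneg fun i _ => sq_nonneg _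
    have hlam : (2 / (M:ℝ)) * |c i0| ≤ lam := hlm' ▸ hl
    have hmain : (2 / (M:ℝ)) * ∑ m, y m * z m ≤ lam * ∑ i, |W i| := by
      rw [hswap]
      calc (2 / (M:ℝ)) * ∑ i, c i * W i
          ≤ (2 / (M:ℝ)) * (|c i0| * ∑ i, |W i|) := by
            apply mul_le_mul_of_nonneg_left _ (by positivity)
            rw [← habs2]; exact habs1
        _ = ((2 / (M:ℝ)) * |c i0|) * ∑ i, |W i| := by ring
        _ ≤ lam * ∑ i, |W i| := mul_le_mul_of_nonneg_right hlam hWn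
    rw [e4]
    have h1M : (0:ℝ) < 1 / M := by positivity
    have hexp : (1/(M:ℝ)) * (∑ m, (y m)^2 - 2 * ∑ m, y m * z m + ∑ m, (z m)^2)
        = (1/(M:ℝ)) * ∑ m, (y m)^2 - (2/(M:ℝ)) * ∑ m, y m * z m
          + (1/(M:ℝ)) * ∑ m, (z m)^2 := by ring
    rw [hexp]
    have := mul_nonneg hα hW2
    have := mul_nonneg h1M.le hz2
    linarith
end

section
/- Let α ≥ 0, ε > 0, J(W) = (1/M)Σ_{m=1}^M (y^m − ⟨X^m,W⟩)² + α‖W‖_F², and Γ(W;λ) = J(W) + λ‖W‖₁. For an index tuple idx, let E_idx denote the coordinate tensor e_{i₁}∘⋯∘e_{i_N}, and define λ₀ = (J(0) − min over all index tuples idx and s ∈ {−ε,ε} of J(s·E_idx))/ε, where 0 is the zero tensor. If there exist an index tuple idx and s with |s| = ε such that Γ(s·E_idx; λ) ≤ Γ(0; λ), then λ ≤ λ₀. (Lemma 2: validity of the initial tuning parameter λ₀ of SURF.) -/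
/-- Lemma 2: validity of the initial tuning parameter `λ₀` of
SURF: if some initial ε-step does not increase the penalized loss at `λ`,
then `λ ≤ λ₀`. -/
theorem stmt_11 {N M : ℕ} {I : Fin N → ℕ} [∀ n, NeZero (I n)] (hM : 0 < M)
    (X : Fin M → ((n : Fin N) → Fin (I n)) → ℝ) (y : Fin M → ℝ)
    (α ε : ℝ) (hα : 0 ≤ α) (hε : 0 < ε)
    (J : (((n : Fin N) → Fin (I n)) → ℝ) → ℝ)
    (hJ : ∀ W, J W = (1 / (M : ℝ)) * ∑ m, (y m - ∑ i, X m i * W i) ^ 2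
        + α * ∑ i, (W i) ^ 2)
    (Γ : (((n : Fin N) → Fin (I n)) → ℝ) → ℝ → ℝ)
    (hΓ : ∀ W lam, Γ W lam = J W + lam * ∑ i, |W i|)
    (E : ((n : Fin N) → Fin (I n)) → ((n : Fin N) → Fin (I n)) → ℝ)
    (hE : ∀ idx i, E idx i = ∏ n, (Pi.single (idx n) 1 : Fin (I n) → ℝ) (i n))
    (lam0 : ℝ)
    (hl0 : lam0 = (J 0 - ⨅ p : ((n : Fin N) → Fin (I n)) × Bool,
        J ((if p.2 then ε else -ε) • E p.1)) / ε)
    (lam : ℝ)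
    (h : ∃ (idx : (n : Fin N) → Fin (I n)) (s : ℝ),
        |s| = ε ∧ Γ (s • E idx) lam ≤ Γ 0 lam) :
    lam ≤ lam0 := by
  obtain ⟨idx, s, hs, hle⟩ := h
  -- E idx is the indicator of idx
  have hEval : ∀ i, E idx i = if i = idx then (1 : ℝ) else 0 := by
    intro i
    rw [hE]
    by_cases hi : i = idx
    · subst hi
      simp [Pi.single_eq_same]
    · obtain ⟨n, hn⟩ := Function.ne_iff.mp hi
      rw [if_neg hi]
      exact Finset.prod_eq_zero (Finset.mem_univ n) (by simp [Pi.single_eq_of_ne hn])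
  have hsum : ∑ i, |(s • E idx) i| = ε := by
    have : ∀ i, |(s • E idx) i| = if i = idx then ε else 0 := by
      intro i
      rw [Pi.smul_apply, smul_eq_mul, abs_mul, hs, hEval]
      by_cases hi : i = idx <;> simp [hi]
    rw [Finset.sum_congr rfl fun i _ => this i, Finset.sum_ite_eq' Finset.univ idx]
    simp
  have hzero : ∑ i : ((n : Fin N) → Fin (I n)), |(0 : ((n : Fin N) → Fin (I n)) → ℝ) i| = 0 := by
    simp
  have key : J (s • E idx) + lam * ε ≤ J 0 := by
    have := hle
    rw [hΓ, hΓ, hsum, hzero] at this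
    linarith
  -- infimum bound
  have hinf : (⨅ p : ((n : Fin N) → Fin (I n)) × Bool,
      J ((if p.2 then ε else -ε) • E p.1)) ≤ J (s • E idx) := by
    rcases abs_eq (le_of_lt hε) |>.mp hs with hs' | hs'
    · have := ciInf_le (f := fun p : ((n : Fin N) → Fin (I n)) × Bool =>
        J ((if p.2 then ε else -ε) • E p.1))
        (Set.Finite.bddBelow (Set.finite_range _)) (idx, true)
      simpa [hs'] using this
    · have := ciInf_le (f := fun p : ((n : Fin N) → Fin (I n)) × Bool =>
        J ((if p.2 then ε else -ε) • E p.1))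
        (Set.Finite.bddBelow (Set.finite_range _)) (idx, false)
      simpa [hs'] using this
  rw [hl0, le_div_iff₀ hε]
  linarith
end

section
/- Let Ẑ ∈ ℝ^{P×I}, ŷ ∈ ℝ^P, M > 0, and define J(w) = (1/M)‖ŷ − Ẑw‖₂² and Γ(w;λ) = J(w) + λ‖w‖₁ for w ∈ ℝ^I. Let ε > 0, ξ ≥ 0, λ ≥ 0, and let ŵ ∈ ℝ^I be such that every nonzero entry of ŵ has absolute value at least ε. Assume: (i) for every coordinate i with ŵ_i ≠ 0, Γ(ŵ − sign(ŵ_i)·ε·e_i; λ) > Γ(ŵ; λ) − ξ (no backward step improves Γ by ξ); and (ii) for every coordinate i and every s ∈ {−ε, ε}, J(ŵ) − J(ŵ + s·e_i) − ξ < λ·ε. Then for every coordinate i and every s ∈ {−ε, ε}, Γ(ŵ + s·e_i; λ) > Γ(ŵ; λ) − ξ. (Lemma 4: when the tuning parameter decreases at a SURF iteration, the penalized loss at the previous tuning parameter can no longer be improved by any ε-step, up to tolerance ξ.) -/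
/-- Lemma 4: if no backward step improves `Γ(·;λ)` by `ξ` and
every forward ε-step fails the λ-update criterion, then no ε-step (in either
direction) improves `Γ(·;λ)` by `ξ`. -/
theorem stmt_13 {P I : ℕ} (Zhat : Matrix (Fin P) (Fin I) ℝ) (yhat : Fin P → ℝ)
    (M : ℝ) (hM : 0 < M)
    (J : (Fin I → ℝ) → ℝ)
    (hJ : ∀ w, J w = (1 / M) * ∑ p, (yhat p - Zhat.mulVec w p) ^ 2)
    (Γ : (Fin I → ℝ) → ℝ → ℝ)
    (hΓ : ∀ w lam, Γ w lam = J w + lam * ∑ j, |w j|)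
    (ε ξ lam : ℝ) (hε : 0 < ε) (hξ : 0 ≤ ξ) (hlam : 0 ≤ lam)
    (what : Fin I → ℝ)
    (hbig : ∀ i, what i ≠ 0 → ε ≤ |what i|)
    (hback : ∀ i, what i ≠ 0 →
        Γ what lam - ξ <
          Γ (what - (Real.sign (what i) * ε) • (Pi.single i 1 : Fin I → ℝ)) lam)
    (hfwd : ∀ (i : Fin I) (s : ℝ), s = ε ∨ s = -ε →
        J what - J (what + s • (Pi.single i 1 : Fin I → ℝ)) - ξ < lam * ε) :
    ∀ (i : Fin I) (s : ℝ), s = ε ∨ s = -ε →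
      Γ what lam - ξ < Γ (what + s • (Pi.single i 1 : Fin I → ℝ)) lam := by
  intro i s hs
  have hpt : what + s • (Pi.single i 1 : Fin I → ℝ) = Function.update what i (what i + s) := by
    funext j
    rcases eq_or_ne j i with rfl | h
    · simp
    · simp [h]
  have hsum : ∀ a : ℝ, ∑ j, |Function.update what i a j|
      = (∑ j, |what j|) + (|a| - |what i|) := by
    intro a
    have h1 : ∑ j, (|Function.update what i a j| - |what j|) = |a| - |what i| := by
      rw [Fintype.sum_eq_single i]
      · simp
      · intro j hj; simp [Function.update_of_ne hj]
    rw [Finset.sum_sub_distrib] at h1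
    linarith
  have key : |what i + s| = |what i| + ε →
      Γ what lam - ξ < Γ (what + s • (Pi.single i 1 : Fin I → ℝ)) lam := by
    intro habs
    have hf := hfwd i s hs
    rw [hpt] at hf
    rw [hΓ, hΓ, hpt, hsum (what i + s), habs]
    have hexp : lam * ((∑ j, |what j|) + (|what i| + ε - |what i|))
        = lam * (∑ j, |what j|) + lam * ε := by ring
    rw [hexp]
    linarith
  rcases hs with hs | hs
  · rcases lt_trichotomy (what i) 0 with h | h | h
    · have hb := hback i (ne_of_lt h)
      have heq : what - (Real.sign (what i) * ε) • (Pi.single i 1 : Fin I → ℝ)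
          = what + s • (Pi.single i 1 : Fin I → ℝ) := by
        rw [hs, Real.sign_of_neg h, neg_one_mul, neg_smul, sub_neg_eq_add]
      rw [heq] at hb
      exact hb
    · apply key
      rw [h, hs]
      simp [abs_of_pos hε]
    · apply key
      rw [hs, abs_of_pos h, abs_of_pos (by linarith : (0:ℝ) < what i + ε)]
  · rcases lt_trichotomy (what i) 0 with h | h | h
    · apply key
      rw [hs, abs_of_neg h, abs_of_neg (by linarith : what i + -ε < 0)]
      ring
    · apply key
      rw [h, hs]
      simp [abs_of_pos hε]
    · have hb := hback i (ne_of_gt h)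
      have heq : what - (Real.sign (what i) * ε) • (Pi.single i 1 : Fin I → ℝ)
          = what + s • (Pi.single i 1 : Fin I → ℝ) := by
        rw [hs, Real.sign_of_pos h, one_mul, neg_smul, sub_eq_add_neg]
      rw [heq] at hb
      exact hb
end

section
/- Let f : ℝ → ℝ be convex, x ∈ ℝ, ε > 0, and ξ ≥ 0. If f(x + ε) ≥ f(x) − ξ and f(x − ε) ≥ f(x) − ξ, then for every y ∈ ℝ with |y − x| ≥ ε one has f(y) ≥ f(x) − (|y − x|/ε)·ξ. In particular, an (ε,ξ)-approximate coordinate minimum of a convex function is globally near-optimal along that coordinate up to error proportional to ξ/ε, which drives the convergence of the stagewise solution to a coordinate-wise minimum as ε, ξ → 0 (Theorem 1 ingredient). -/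
/-!
Put `t = ε / |y - x| ∈ (0, 1]`. The point `x + t (y - x)` is `x + ε` or `x - ε`, so by hypothesis
`f` there is at least `f x - ξ`, while convexity along the segment from `x` to `y` bounds it by
`f x + t (f y - f x)`. Hence `t (f y - f x) ≥ -ξ`, i.e. `f y ≥ f x - ξ / t`.
-/

theorem ConvexOn.apply_add_smul_sub_sub_le {𝕜 E : Type*} [Field 𝕜] [LinearOrder 𝕜]
    [IsStrictOrderedRing 𝕜] [AddCommGroup E] [Module 𝕜 E] {s : Set E} {f : E → 𝕜}
    (hf : ConvexOn 𝕜 s f) {x y : E} (hx : x ∈ s) (hy : y ∈ s) {t : 𝕜} (ht₀ : 0 ≤ t)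
    (ht₁ : t ≤ 1) : f (x + t • (y - x)) - f x ≤ t * (f y - f x) := by
  have hseg := hf.2 hx hy (sub_nonneg.2 ht₁) ht₀ (sub_add_cancel 1 t)
  rw [← AffineMap.lineMap_apply_module, AffineMap.lineMap_apply_module', add_comm] at hseg
  simp only [smul_eq_mul] at hseg
  linarith

theorem stmt_15_general (f : ℝ → ℝ) (hf : ConvexOn ℝ Set.univ f)
    (x ε ξ : ℝ) (hε : 0 < ε)
    (h1 : f x - ξ ≤ f (x + ε)) (h2 : f x - ξ ≤ f (x - ε)) :
    ∀ y : ℝ, ε ≤ |y - x| → f x - (|y - x| / ε) * ξ ≤ f y := by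
  intro y hy
  have hd : 0 < |y - x| := hε.trans_le hy
  set t := ε / |y - x| with ht
  have ht₀ : 0 < t := div_pos hε hd
  have hstep : |t * (y - x)| = ε := by
    rw [abs_mul, abs_of_pos ht₀, div_mul_cancel₀ _ hd.ne']
  have hnear : f x - ξ ≤ f (x + t * (y - x)) := by
    rcases (abs_eq hε.le).1 hstep with h | h
    · rwa [h]
    · rwa [h, ← sub_eq_add_neg]
  have hconv := hf.apply_add_smul_sub_sub_le (Set.mem_univ x) (Set.mem_univ y) ht₀.le
    ((div_le_one hd).2 hy)
  have hslope : -ξ / t ≤ f y - f x := by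
    rw [div_le_iff₀ ht₀]
    simp only [smul_eq_mul] at hconv
    linarith
  have hξt : -ξ / t = -(|y - x| / ε * ξ) := by
    rw [ht]
    field_simp
  linarith

/-- an (ε,ξ)-approximate coordinate minimum of a convex function
on ℝ is globally near-optimal: `f y ≥ f x − (|y−x|/ε)·ξ` whenever `|y−x| ≥ ε`. -/
theorem stmt_15 (f : ℝ → ℝ) (hf : ConvexOn ℝ Set.univ f)
    (x ε ξ : ℝ) (hε : 0 < ε) (hξ : 0 ≤ ξ)
    (h1 : f x - ξ ≤ f (x + ε)) (h2 : f x - ξ ≤ f (x - ε)) :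
    ∀ y : ℝ, ε ≤ |y - x| → f x - (|y - x| / ε) * ξ ≤ f y :=
  stmt_15_general f hf x ε ξ hε h1 h2
end

section
/- Assume the predictors are standardized: Σ_{m=1}^M (X^m_{i₁,…,i_N})² = M for every index tuple (i₁,…,i_N). Let α ≥ 0, ε > 0, J(W) = (1/M)Σ_{m=1}^M (y^m − ⟨X^m,W⟩)² + α‖W‖_F², c_{i₁,…,i_N} = Σ_{m=1}^M y^m X^m_{i₁,…,i_N}, and for an index tuple idx let E_idx denote the coordinate tensor e_{i₁}∘⋯∘e_{i_N}. Then λ₀ := (J(0) − min over all index tuples idx and s ∈ {−ε,ε} of J(s·E_idx))/ε = (2/M)·max over all index tuples of |c_{i₁,…,i_N}| − ε(1+α); i.e., the initial tuning parameter of SURF equals λ_max − ε(1+α), where λ_max = (2/M)·max |c_{i₁,…,i_N}|. -/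
/-- under standardized predictors, the initial tuning parameter
of SURF equals `λ_max − ε(1+α)` where `λ_max = (2/M)·max |c_idx|`. -/
theorem stmt_18 {N M : ℕ} {I : Fin N → ℕ} [∀ n, NeZero (I n)] (hM : 0 < M)
    (X : Fin M → ((n : Fin N) → Fin (I n)) → ℝ) (y : Fin M → ℝ)
    (hstd : ∀ i : (n : Fin N) → Fin (I n), ∑ m, (X m i) ^ 2 = (M : ℝ))
    (α ε : ℝ) (hα : 0 ≤ α) (hε : 0 < ε)
    (J : (((n : Fin N) → Fin (I n)) → ℝ) → ℝ)
    (hJ : ∀ W, J W = (1 / (M : ℝ)) * ∑ m, (y m - ∑ i, X m i * W i) ^ 2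
        + α * ∑ i, (W i) ^ 2)
    (c : ((n : Fin N) → Fin (I n)) → ℝ)
    (hc : ∀ i, c i = ∑ m, y m * X m i)
    (E : ((n : Fin N) → Fin (I n)) → ((n : Fin N) → Fin (I n)) → ℝ)
    (hE : ∀ idx i, E idx i = ∏ n, (Pi.single (idx n) 1 : Fin (I n) → ℝ) (i n)) :
    (J 0 - ⨅ p : ((n : Fin N) → Fin (I n)) × Bool,
        J ((if p.2 then ε else -ε) • E p.1)) / ε
      = (2 / (M : ℝ)) * (⨆ i : (n : Fin N) → Fin (I n), |c i|)
        - ε * (1 + α) := by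
  classical
  have hMR : (0:ℝ) < (M:ℝ) := by exact_mod_cast hM
  -- E idx i is an indicator
  have hEind : ∀ idx i : ((n : Fin N) → Fin (I n)), E idx i = if i = idx then (1:ℝ) else 0 := by
    intro idx i
    rw [hE]
    by_cases h : i = idx
    · subst h
      simp
    · obtain ⟨n, hn⟩ : ∃ n, i n ≠ idx n := by
        by_contra hco
        push_neg at hco
        exact h (funext hco)
      rw [if_neg h]
      refine Finset.prod_eq_zero (Finset.mem_univ n) ?_
      simp [Pi.single_eq_of_ne hn]
  -- value of J at s • E idx
  have hJs : ∀ (s : ℝ) (idx : ((n : Fin N) → Fin (I n))),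
      J (s • E idx) = J 0 - (2 / (M:ℝ)) * (s * c idx) + s^2 * (1 + α) := by
    intro s idx
    have hinner : ∀ m, ∑ i, X m i * (s • E idx) i = s * X m idx := by
      intro m
      have : ∀ i : ((n : Fin N) → Fin (I n)), X m i * (s • E idx) i
          = if i = idx then s * X m idx else 0 := by
        intro i
        rw [Pi.smul_apply, hEind]
        by_cases h : i = idx <;> simp [h] <;> ring
      rw [Finset.sum_congr rfl (fun i _ => this i), Finset.sum_ite_eq' Finset.univ idx]
      simp
    have hnorm : ∑ i, ((s • E idx) i)^2 = s^2 := by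
      have : ∀ i : ((n : Fin N) → Fin (I n)), ((s • E idx) i)^2 = if i = idx then s^2 else 0 := by
        intro i
        rw [Pi.smul_apply, hEind]
        by_cases h : i = idx <;> simp [h]
      rw [Finset.sum_congr rfl (fun i _ => this i), Finset.sum_ite_eq' Finset.univ idx]
      simp
    have hJ0 : J 0 = (1 / (M:ℝ)) * ∑ m, (y m)^2 := by
      rw [hJ]; simp
    rw [hJ, hJ0]
    have hsum : ∑ m, (y m - ∑ i, X m i * (s • E idx) i) ^ 2
        = ∑ m, (y m)^2 - 2 * s * c idx + s^2 * (M:ℝ) := by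
      have : ∀ m, (y m - ∑ i, X m i * (s • E idx) i) ^ 2
          = (y m)^2 - 2 * s * (y m * X m idx) + s^2 * (X m idx)^2 := by
        intro m; rw [hinner m]; ring
      rw [Finset.sum_congr rfl (fun m _ => this m)]
      rw [Finset.sum_add_distrib, Finset.sum_sub_distrib, ← Finset.mul_sum,
        ← Finset.mul_sum, hstd, hc]
    rw [hsum, hnorm]
    field_simp
    ring
  -- rewrite the infimum argument
  have hfun : ∀ p : ((n : Fin N) → Fin (I n)) × Bool,
      J ((if p.2 then ε else -ε) • E p.1)
        = J 0 + ε^2 * (1 + α) - (2 / (M:ℝ)) * ((if p.2 then ε else -ε) * c p.1) := by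
    intro p
    rw [hJs]
    have : (if p.2 then ε else -ε)^2 = ε^2 := by
      by_cases h : p.2 <;> simp [h] <;> ring
    rw [this]; ring
  set Csup := ⨆ i : ((n : Fin N) → Fin (I n)), |c i| with hCsup
  have hne : Nonempty ((n : Fin N) → Fin (I n)) := inferInstance
  have hbddc : BddAbove (Set.range fun i : ((n : Fin N) → Fin (I n)) => |c i|) := Set.Finite.bddAbove (Set.finite_range _)
  have hle_sup : ∀ i : ((n : Fin N) → Fin (I n)), |c i| ≤ Csup := fun i => le_ciSup hbddc i
  obtain ⟨i0, hi0⟩ : ∃ i : ((n : Fin N) → Fin (I n)), |c i| = Csup := by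
    obtain ⟨i, hi⟩ := Finite.exists_max (fun i : ((n : Fin N) → Fin (I n)) => |c i|)
    refine ⟨i, le_antisymm (hle_sup i) (ciSup_le hi)⟩
  have hinf : (⨅ p : ((n : Fin N) → Fin (I n)) × Bool, J ((if p.2 then ε else -ε) • E p.1))
      = J 0 + ε^2 * (1 + α) - (2 / (M:ℝ)) * (ε * Csup) := by
    apply le_antisymm
    · -- pick the maximizer with the right sign
      set b0 : Bool := decide (0 ≤ c i0) with hb0
      have key : (if b0 then ε else -ε) * c i0 = ε * Csup := by
        by_cases h : 0 ≤ c i0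
        · simp [hb0, h, ← hi0, abs_of_nonneg h]
        · have h' : c i0 < 0 := lt_of_not_ge h
          simp [hb0, h, ← hi0, abs_of_neg h']
      calc (⨅ p : ((n : Fin N) → Fin (I n)) × Bool, J ((if p.2 then ε else -ε) • E p.1))
          ≤ J ((if b0 then ε else -ε) • E i0) :=
            ciInf_le (Set.Finite.bddBelow (Set.finite_range
              (fun p : ((n : Fin N) → Fin (I n)) × Bool =>
                J ((if p.2 then ε else -ε) • E p.1)))) ⟨i0, b0⟩
        _ = J 0 + ε^2 * (1 + α) - (2 / (M:ℝ)) * (ε * Csup) := by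
            rw [hfun ⟨i0, b0⟩]; simp only; rw [key]
    · apply le_ciInf
      intro p
      rw [hfun p]
      have h1 : (if p.2 then ε else -ε) * c p.1 ≤ ε * Csup := by
        have habs : (if p.2 then ε else -ε) * c p.1 ≤ |(if p.2 then ε else -ε) * c p.1| :=
          le_abs_self _
        have h2 : |(if p.2 then ε else -ε) * c p.1| = ε * |c p.1| := by
          rw [abs_mul]
          congr 1
          by_cases h : p.2 <;> simp [h, abs_of_pos hε]
        refine habs.trans ?_
        rw [h2]
        exact mul_le_mul_of_nonneg_left (hle_sup p.1) hε.le
      have h3 : (2 / (M:ℝ)) * ((if p.2 then ε else -ε) * c p.1) ≤ (2 / (M:ℝ)) * (ε * Csup) :=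
        mul_le_mul_of_nonneg_left h1 (by positivity)
      linarith
  rw [hinf]
  field_simp
  ring
end
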